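/- Let f : [0,1] → [0,∞) satisfy f(p) = f(1−p) for all p ∈ [0,1], with p ↦ f(p)/p non-increasing on (0,1]. Let 0 ≤ p_1 ≤ … ≤ p_m ≤ 1, let 1 ≤ i ≤ k ≤ m−1. Then (p_i − p_{k+1})·C_f(m−k−1; p_{−(i,k+1)}) + p_{k+1}·C_f(m−k−1; p_{−(k+1)}) − p_i·C_f(m−k−1; p_{−i}) ≤ p_{k+1}·f(p_i) − p_i·f(p_{k+1}), where p_{−(i,k+1)} denotes the list with both entries i and k+1 removed. -/

import Mathlib

/-!
Loaded induction on the length `n` of a sorted list of probabilities, proving at once the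
rank rule (for the threshold `θ` it is optimal to query first the `θ`-th largest probability)
and the exchange bound `S² ≤ p_j f(p_i) - p_i f(p_j)`.

Given the rank rule on shorter lists, the three costs in `S²` all expand along the same first
query `c`, and `S²` becomes the `c`-weighted mixture of the two `S²`'s (thresholds `θ - 1`
and `θ`) on the list without `c`; when `c` is `p_j` itself the bound comes out directly.
For the rank rule, the duality `C_f(θ; p) = C_f(n + 1 - θ; 1 - p)`, which follows from
`f(p) = f(1 - p)`, leaves only the comparison with later positions. There the same expansion
writes the difference of the two query costs as a mixture of dual exchange terms, bounded by
the exchange bound on the dual list; when `θ = n` the ratio monotonicity, in the form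
`(1 - b) f(a) ≤ (1 - a) f(b)` for `a ≤ b`, is used instead.
-/

/-- The optimal expected cost `C_f(θ; p)` of sequentially computing the Boolean
threshold function `Π_θ` on independent Bernoulli variables with parameters given by
the list `p`, where querying a node with parameter `q` costs `f q`.
`cost f θ p = 0` if `θ = 0` or `θ > p.length`, and otherwise it is the minimum over
nodes `i` of `f p_i + p_i • cost f (θ-1) p_{-i} + (1 - p_i) • cost f θ p_{-i}`. -/
noncomputable def cost (f : ℝ → ℝ) : ℕ → List ℝ → ℝ
  | 0, _ => 0
  | (θ+1), p =>
      if p.length < θ + 1 then 0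
      else ⨅ i : Fin p.length,
        (f (p.get i) + p.get i * cost f θ (p.eraseIdx i.1)
          + (1 - p.get i) * cost f (θ+1) (p.eraseIdx i.1))
termination_by θ p => p.length
decreasing_by
  all_goals (have h := i.isLt; simp [List.length_eraseIdx, h]; omega)

namespace List

variable {α : Type*}

theorem getD_eraseIdx_of_lt (l : List α) (d : α) {i j : ℕ} (h : j < i) :
    (l.eraseIdx i).getD j d = l.getD j d := by
  simp only [getD_eq_getElem?_getD, getElem?_eraseIdx_of_lt h]

theorem getD_eraseIdx_of_le (l : List α) (d : α) {i j : ℕ} (h : i ≤ j) :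
    (l.eraseIdx i).getD j d = l.getD (j + 1) d := by
  simp only [getD_eq_getElem?_getD, getElem?_eraseIdx_of_ge h]

theorem eraseIdx_eraseIdx_of_le (l : List α) {i j : ℕ} (h : i ≤ j) :
    (l.eraseIdx i).eraseIdx j = (l.eraseIdx (j + 1)).eraseIdx i := by
  apply ext_getElem?
  intro n
  simp only [getElem?_eraseIdx]
  split_ifs <;> first | rfl | (congr 1; omega)

theorem getD_mem {l : List α} {d : α} {j : ℕ} (hj : j < l.length) : l.getD j d ∈ l := by
  rw [getD_eq_getElem _ _ hj]
  exact getElem_mem hj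

end List

/-- Reversed so that sorted lists stay sorted. -/
def dualList (l : List ℝ) : List ℝ := (l.map (1 - ·)).reverse

@[simp]
theorem length_dualList (l : List ℝ) : (dualList l).length = l.length := by
  simp [dualList]

theorem dualList_eraseIdx (l : List ℝ) {i : ℕ} (hi : i < l.length) :
    dualList (l.eraseIdx i) = (dualList l).eraseIdx (l.length - 1 - i) := by
  have hlen := List.length_eraseIdx_of_lt hi
  have hlen' := List.length_eraseIdx_of_lt (l := dualList l) (i := l.length - 1 - i)
    (by simp [dualList]; omega)
  apply List.ext_getElem (by simp_all [dualList])
  intro n h1 h2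
  simp only [dualList, List.length_reverse, List.length_map] at hlen' h1 h2
  simp only [dualList, List.getElem_reverse, List.getElem_map, List.getElem_eraseIdx,
    List.length_map, hlen]
  split_ifs <;> (congr 2; omega)

theorem getD_dualList (l : List ℝ) {j : ℕ} (hj : j < l.length) :
    (dualList l).getD j 0 = 1 - l.getD (l.length - 1 - j) 0 := by
  simp [dualList, List.getD_eq_getElem?_getD, hj,
    List.getElem?_eq_getElem (by omega : l.length - 1 - j < l.length)]

theorem dualList_pairwise {l : List ℝ} (h : l.Pairwise (· ≤ ·)) :
    (dualList l).Pairwise (· ≤ ·) := by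
  simp only [dualList, List.pairwise_reverse, List.pairwise_map]
  exact h.imp fun hab => by linarith

theorem mem_Icc_of_mem_dualList {l : List ℝ} (h : ∀ x ∈ l, x ∈ Set.Icc (0 : ℝ) 1) :
    ∀ x ∈ dualList l, x ∈ Set.Icc (0 : ℝ) 1 := by
  simp only [dualList, List.mem_reverse, List.mem_map]
  rintro _ ⟨y, hy, rfl⟩
  obtain ⟨h0, h1⟩ := h y hy
  constructor <;> linarith

/-- Cost of querying first a node of probability `x`, for the threshold `t + 1`, with `L` the
remaining nodes. -/
noncomputable def queryCost (f : ℝ → ℝ) (t : ℕ) (x : ℝ) (L : List ℝ) : ℝ :=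
  f x + x * cost f t L + (1 - x) * cost f (t + 1) L

section cost

variable {f : ℝ → ℝ}

@[simp]
theorem cost_zero (f : ℝ → ℝ) (q : List ℝ) : cost f 0 q = 0 := by
  rw [cost]

theorem cost_of_length_lt {θ : ℕ} {q : List ℝ} (h : q.length < θ) : cost f θ q = 0 := by
  cases θ with
  | zero => exact cost_zero f q
  | succ t => rw [cost, if_pos h]

theorem cost_succ {t : ℕ} {q : List ℝ} (h : t + 1 ≤ q.length) :
    cost f (t + 1) q = ⨅ j : Fin q.length, queryCost f t (q.getD j 0) (q.eraseIdx j) := by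
  rw [cost, if_neg (by omega)]
  simp [queryCost]

theorem cost_succ_le {t j : ℕ} {q : List ℝ} (h : t + 1 ≤ q.length) (hj : j < q.length) :
    cost f (t + 1) q ≤ queryCost f t (q.getD j 0) (q.eraseIdx j) := by
  rw [cost_succ h]
  exact ciInf_le (Finite.bddBelow_range _) (⟨j, hj⟩ : Fin q.length)

theorem le_cost_succ {t : ℕ} {q : List ℝ} {c : ℝ} (h : t + 1 ≤ q.length)
    (hc : ∀ j < q.length, c ≤ queryCost f t (q.getD j 0) (q.eraseIdx j)) :
    c ≤ cost f (t + 1) q := by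
  rw [cost_succ h]
  have : Nonempty (Fin q.length) := ⟨⟨0, by omega⟩⟩
  exact le_ciInf fun j => hc j j.isLt

end cost

section duality

variable {f : ℝ → ℝ} (hf_sym : ∀ x ∈ Set.Icc (0 : ℝ) 1, f x = f (1 - x))
include hf_sym

theorem queryCost_dualList {t : ℕ} {x : ℝ} {L : List ℝ} (hx : x ∈ Set.Icc (0 : ℝ) 1)
    (ht : t ≤ L.length) (hL : ∀ θ, cost f θ L = cost f (L.length + 1 - θ) (dualList L)) :
    queryCost f t x L = queryCost f (L.length - t) (1 - x) (dualList L) := by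
  have e1 : L.length + 1 - t = L.length - t + 1 := by omega
  have e2 : L.length + 1 - (t + 1) = L.length - t := by omega
  simp only [queryCost, hL t, hL (t + 1), e1, e2, ← hf_sym x hx]
  ring

theorem queryCost_getD_dualList {t j : ℕ} {q : List ℝ}
    (hq : ∀ x ∈ q, x ∈ Set.Icc (0 : ℝ) 1) (ht : t + 1 ≤ q.length) (hj : j < q.length)
    (hL : ∀ θ, cost f θ (q.eraseIdx j) =
      cost f ((q.eraseIdx j).length + 1 - θ) (dualList (q.eraseIdx j))) :
    queryCost f t (q.getD j 0) (q.eraseIdx j) =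
      queryCost f (q.length - 1 - t) ((dualList q).getD (q.length - 1 - j) 0)
        ((dualList q).eraseIdx (q.length - 1 - j)) := by
  have hlen := List.length_eraseIdx_of_lt hj
  rw [queryCost_dualList hf_sym (hq _ (List.getD_mem hj)) (by omega) hL, hlen,
    getD_dualList _ (by omega), dualList_eraseIdx _ hj, Nat.sub_sub_self (by omega)]

theorem cost_dualList {q : List ℝ} (hq : ∀ x ∈ q, x ∈ Set.Icc (0 : ℝ) 1) (θ : ℕ) :
    cost f θ q = cost f (q.length + 1 - θ) (dualList q) := by
  rcases θ with _ | t
  · rw [cost_zero, cost_of_length_lt (by simp)]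
  rcases lt_or_ge q.length (t + 1) with hlt | hle
  · rw [cost_of_length_lt hlt, show q.length + 1 - (t + 1) = 0 by omega, cost_zero]
  have hq' (j : ℕ) : ∀ x ∈ q.eraseIdx j, x ∈ Set.Icc (0 : ℝ) 1 :=
    fun x hx => hq x (List.mem_of_mem_eraseIdx hx)
  have key (j : ℕ) (hj : j < q.length) := queryCost_getD_dualList hf_sym hq hle hj
    (cost_dualList (hq' j))
  rw [show q.length + 1 - (t + 1) = q.length - 1 - t + 1 by omega]
  apply le_antisymm
  · refine le_cost_succ (by simp; omega) fun j hj => ?_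
    simp only [length_dualList] at hj
    have := key (q.length - 1 - j) (by omega)
    rw [Nat.sub_sub_self (by omega)] at this
    exact this ▸ cost_succ_le hle (by omega)
  · refine le_cost_succ hle fun j hj => ?_
    exact key j hj ▸ cost_succ_le (by simp; omega) (by simp; omega)
termination_by q.length
decreasing_by simp [List.length_eraseIdx_of_lt hj]; omega

end duality

section ratio

variable {f : ℝ → ℝ} (hf_nonneg : ∀ x ∈ Set.Icc (0 : ℝ) 1, 0 ≤ f x)
  (hf_mono : AntitoneOn (fun x => f x / x) (Set.Ioc (0 : ℝ) 1))
include hf_nonneg hf_mono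

theorem mul_le_mul_of_antitoneOn_div {a b : ℝ} (ha : 0 ≤ a) (hab : a ≤ b) (hb : b ≤ 1) :
    a * f b ≤ b * f a := by
  rcases ha.eq_or_lt with rfl | ha
  · simpa using mul_nonneg (ha.trans hab) (hf_nonneg 0 (by simp))
  have hb0 : 0 < b := ha.trans_le hab
  have := hf_mono ⟨ha, hab.trans hb⟩ ⟨hb0, hb⟩ hab
  rw [div_le_div_iff₀ hb0 ha] at this
  linarith

theorem one_sub_mul_le_of_antitoneOn_div (hf_sym : ∀ x ∈ Set.Icc (0 : ℝ) 1, f x = f (1 - x))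
    {a b : ℝ} (ha : 0 ≤ a) (hab : a ≤ b) (hb : b ≤ 1) :
    (1 - b) * f a ≤ (1 - a) * f b := by
  have := mul_le_mul_of_antitoneOn_div hf_nonneg hf_mono (a := 1 - b) (b := 1 - a)
    (by linarith) (by linarith) (by linarith)
  rwa [← hf_sym a ⟨ha, by linarith⟩, ← hf_sym b ⟨by linarith, hb⟩] at this

end ratio

structure SortedProbs (l : List ℝ) : Prop where
  sorted : l.Pairwise (· ≤ ·)
  mem_Icc : ∀ x ∈ l, x ∈ Set.Icc (0 : ℝ) 1

namespace SortedProbs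

variable {l : List ℝ}

theorem eraseIdx (h : SortedProbs l) (i : ℕ) : SortedProbs (l.eraseIdx i) :=
  ⟨h.sorted.eraseIdx i, fun x hx => h.mem_Icc x (List.mem_of_mem_eraseIdx hx)⟩

theorem dualList (h : SortedProbs l) : SortedProbs (dualList l) :=
  ⟨dualList_pairwise h.sorted, mem_Icc_of_mem_dualList h.mem_Icc⟩

theorem getD_mem_Icc (h : SortedProbs l) {j : ℕ} (hj : j < l.length) :
    l.getD j 0 ∈ Set.Icc (0 : ℝ) 1 :=
  h.mem_Icc _ (List.getD_mem hj)

theorem getD_le_getD (h : SortedProbs l) {i j : ℕ} (hij : i ≤ j) (hj : j < l.length) :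
    l.getD i 0 ≤ l.getD j 0 := by
  rw [List.getD_eq_getElem _ _ (hij.trans_lt hj), List.getD_eq_getElem _ _ hj]
  rcases hij.eq_or_lt with rfl | hlt
  · rfl
  · exact List.pairwise_iff_getElem.mp h.sorted _ _ _ _ hlt

end SortedProbs

/-- The quantity `S²` of the paper, for the entries at positions `i < j` of `r`. -/
noncomputable def exchangeTerm (f : ℝ → ℝ) (θ : ℕ) (r : List ℝ) (i j : ℕ) : ℝ :=
  r.getD j 0 * cost f θ (r.eraseIdx j) - r.getD i 0 * cost f θ (r.eraseIdx i)
    - (r.getD j 0 - r.getD i 0) * cost f θ ((r.eraseIdx j).eraseIdx i)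

/-- The image of `exchangeTerm` under `dualList` (see `dualExchangeTerm_eq`). -/
noncomputable def dualExchangeTerm (f : ℝ → ℝ) (θ : ℕ) (r : List ℝ) (i j : ℕ) : ℝ :=
  (1 - r.getD i 0) * cost f (θ + 1) (r.eraseIdx i)
    - (1 - r.getD j 0) * cost f (θ + 1) (r.eraseIdx j)
    - (r.getD j 0 - r.getD i 0) * cost f θ ((r.eraseIdx j).eraseIdx i)

/-- Part (a) of the paper: for the threshold `t + 1` it is optimal to query first the
`(t + 1)`-st largest entry. -/
def RankRule (f : ℝ → ℝ) (n : ℕ) : Prop :=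
  ∀ q, SortedProbs q → q.length = n → ∀ s t, s + t + 1 = n →
    cost f (t + 1) q = queryCost f t (q.getD s 0) (q.eraseIdx s)

def ExchangeBound (f : ℝ → ℝ) (n : ℕ) : Prop :=
  ∀ r, SortedProbs r → r.length = n → ∀ i j θ, i < j → j < n → j + θ ≤ n →
    exchangeTerm f θ r i j ≤ r.getD j 0 * f (r.getD i 0) - r.getD i 0 * f (r.getD j 0)

theorem dualExchangeTerm_eq {f : ℝ → ℝ}
    (hf_sym : ∀ x ∈ Set.Icc (0 : ℝ) 1, f x = f (1 - x)) {r : List ℝ}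
    (hr : ∀ x ∈ r, x ∈ Set.Icc (0 : ℝ) 1) (θ : ℕ) {i j : ℕ} (hij : i < j)
    (hj : j < r.length) :
    dualExchangeTerm f θ r i j =
      exchangeTerm f (r.length - θ - 1) (dualList r) (r.length - 1 - j) (r.length - 1 - i) := by
  have hr' (k : ℕ) : ∀ x ∈ r.eraseIdx k, x ∈ Set.Icc (0 : ℝ) 1 :=
    fun x hx => hr x (List.mem_of_mem_eraseIdx hx)
  have hr'' : ∀ x ∈ (r.eraseIdx j).eraseIdx i, x ∈ Set.Icc (0 : ℝ) 1 :=
    fun x hx => hr' j x (List.mem_of_mem_eraseIdx hx)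
  have hlen (k : ℕ) (hk : k < r.length) := List.length_eraseIdx_of_lt hk
  have hlen2 := List.length_eraseIdx_of_lt (l := r.eraseIdx j) (i := i)
    (by rw [hlen j hj]; omega)
  have hswap : ((dualList r).eraseIdx (r.length - 1 - i)).eraseIdx (r.length - 1 - j) =
      dualList ((r.eraseIdx j).eraseIdx i) := by
    rw [dualList_eraseIdx _ (by rw [hlen j hj]; omega), dualList_eraseIdx _ hj, hlen j hj,
      List.eraseIdx_eraseIdx_of_le (dualList r) (i := r.length - 1 - j) (by omega)]
    congr 2; omega
  have e1 : r.length - 1 + 1 - (θ + 1) = r.length - θ - 1 := by omega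
  have e2 : r.length - 1 - 1 + 1 - θ = r.length - θ - 1 := by omega
  rw [dualExchangeTerm, cost_dualList hf_sym (hr' i), cost_dualList hf_sym (hr' j),
    cost_dualList hf_sym hr'', hlen2, hlen i (by omega), hlen j hj, e1, e2, exchangeTerm,
    getD_dualList _ (by omega), getD_dualList _ (by omega), Nat.sub_sub_self (by omega),
    Nat.sub_sub_self (by omega), hswap, dualList_eraseIdx _ hj, dualList_eraseIdx _ (by omega)]
  ring

theorem ExchangeBound.dualExchangeTerm_le {f : ℝ → ℝ} {n : ℕ} (hC : ExchangeBound f n)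
    (hf_sym : ∀ x ∈ Set.Icc (0 : ℝ) 1, f x = f (1 - x)) {r : List ℝ} (hr : SortedProbs r)
    (hlen : r.length = n) {i j θ : ℕ} (hij : i < j) (hj : j < n) (hθ : n ≤ i + θ + 2) :
    dualExchangeTerm f θ r i j ≤
      (1 - r.getD i 0) * f (r.getD j 0) - (1 - r.getD j 0) * f (r.getD i 0) := by
  subst hlen
  have := hC _ hr.dualList (length_dualList r) (r.length - 1 - j) (r.length - 1 - i)
    (r.length - θ - 1) (by omega) (by omega) (by omega)
  rw [getD_dualList _ (by omega), getD_dualList _ (by omega), Nat.sub_sub_self (by omega),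
    Nat.sub_sub_self (by omega), ← hf_sym _ (hr.getD_mem_Icc hj),
    ← hf_sym _ (hr.getD_mem_Icc (by omega))] at this
  rw [dualExchangeTerm_eq hf_sym hr.mem_Icc θ hij hj]
  linarith

section exchange

variable {f : ℝ → ℝ} {N : ℕ} {r : List ℝ}

theorem exchangeTerm_le_of_rankRule_boundary (hA : RankRule f (N - 1)) (hr : SortedProbs r)
    (hlen : r.length = N) {i j t : ℕ} (hij : i < j) (hjt : j + t + 1 = N) :
    exchangeTerm f (t + 1) r i j ≤
      r.getD j 0 * f (r.getD i 0) - r.getD i 0 * f (r.getD j 0) := by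
  obtain ⟨k, rfl⟩ : ∃ k, j = k + 1 := ⟨j - 1, by omega⟩
  have hb := hr.getD_mem_Icc (j := k + 1) (by omega)
  have hEa := hA _ (hr.eraseIdx i) (by grind) k t (by omega)
  have hEb := cost_succ_le (f := f) (t := t) (q := r.eraseIdx (k + 1)) (j := i) (by grind)
    (by grind)
  simp (disch := omega) only [List.getD_eraseIdx_of_lt, List.getD_eraseIdx_of_le,
    List.eraseIdx_eraseIdx_of_le] at hEa hEb
  rw [exchangeTerm, hEa]
  unfold queryCost at hEb ⊢
  linarith [mul_le_mul_of_nonneg_left hEb hb.1]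

theorem exchangeTerm_le_of_rankRule_interior (hA1 : RankRule f (N - 1))
    (hA2 : RankRule f (N - 2)) (hr : SortedProbs r) (hlen : r.length = N) {i j k t : ℕ}
    (hij : i < j) (hjk : j < k) (hkt : k + t + 1 = N) :
    exchangeTerm f (t + 1) r i j ≤
      r.getD k 0 * exchangeTerm f t (r.eraseIdx k) i j
        + (1 - r.getD k 0) * exchangeTerm f (t + 1) (r.eraseIdx k) i j := by
  obtain ⟨l, rfl⟩ : ∃ l, k = l + 2 := ⟨k - 2, by omega⟩
  have hb := hr.getD_mem_Icc (j := j) (by omega)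
  have hEa := hA1 _ (hr.eraseIdx i) (by grind) (l + 1) t (by omega)
  have hEab := hA2 _ ((hr.eraseIdx j).eraseIdx i) (by grind) l t (by omega)
  have hEb := cost_succ_le (f := f) (t := t) (q := r.eraseIdx j) (j := l + 1) (by grind)
    (by grind)
  simp (disch := omega) only [exchangeTerm, List.getD_eraseIdx_of_lt, List.getD_eraseIdx_of_le,
    List.eraseIdx_eraseIdx_of_le] at hEa hEab hEb ⊢
  rw [hEa, hEab]
  unfold queryCost at hEb ⊢
  linarith [mul_le_mul_of_nonneg_left hEb hb.1]

end exchange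

theorem exchangeBound_of_rankRule {f : ℝ → ℝ}
    (hf_nonneg : ∀ x ∈ Set.Icc (0 : ℝ) 1, 0 ≤ f x)
    (hf_mono : AntitoneOn (fun x => f x / x) (Set.Ioc (0 : ℝ) 1)) {N : ℕ}
    (hA1 : RankRule f (N - 1)) (hA2 : RankRule f (N - 2)) (hC : ExchangeBound f (N - 1)) :
    ExchangeBound f N := by
  intro r hr hlen i j θ hij hj hjθ
  have ha := hr.getD_mem_Icc (j := i) (by omega)
  have hb := hr.getD_mem_Icc (j := j) (by omega)
  rcases θ with _ | t
  · simpa [exchangeTerm] using mul_le_mul_of_antitoneOn_div hf_nonneg hf_mono ha.1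
      (hr.getD_le_getD hij.le (by omega)) hb.2
  rcases hjθ.eq_or_lt with hjt | hjt
  · exact exchangeTerm_le_of_rankRule_boundary hA1 hr hlen hij hjt
  set k := N - t - 1
  have hc := hr.getD_mem_Icc (j := k) (by omega)
  have h0 := hC _ (hr.eraseIdx k) (by grind) i j t hij (by grind) (by grind)
  have h1 := hC _ (hr.eraseIdx k) (by grind) i j (t + 1) hij (by grind) (by grind)
  simp (disch := omega) only [List.getD_eraseIdx_of_lt] at h0 h1
  have := exchangeTerm_le_of_rankRule_interior hA1 hA2 hr hlen hij (k := k) (t := t) (by omega)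
    (by omega)
  linarith [mul_le_mul_of_nonneg_left h0 hc.1, mul_le_mul_of_nonneg_left h1 (sub_nonneg.2 hc.2)]

section rank

variable {f : ℝ → ℝ} {n : ℕ} {q : List ℝ}

theorem queryCost_zero_le_of_rankRule (hf_nonneg : ∀ x ∈ Set.Icc (0 : ℝ) 1, 0 ≤ f x)
    (hf_sym : ∀ x ∈ Set.Icc (0 : ℝ) 1, f x = f (1 - x))
    (hf_mono : AntitoneOn (fun x => f x / x) (Set.Ioc (0 : ℝ) 1)) {t : ℕ}
    (hA : RankRule f (t + 1)) (hq : SortedProbs q) (hlen : q.length = t + 2) {j : ℕ}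
    (hj0 : 0 < j) (hj : j < t + 2) :
    queryCost f (t + 1) (q.getD 0 0) (q.eraseIdx 0) ≤
      queryCost f (t + 1) (q.getD j 0) (q.eraseIdx j) := by
  obtain ⟨m, rfl⟩ : ∃ m, j = m + 1 := ⟨j - 1, by omega⟩
  have hu := hq.getD_mem_Icc (j := 0) (by omega)
  have hw := hq.getD_mem_Icc (j := m + 1) (by omega)
  have hE := hA _ (hq.eraseIdx (m + 1)) (by grind) 0 t (by omega)
  have hU := cost_succ_le (f := f) (t := t) (q := q.eraseIdx 0) (j := m) (by grind) (by grind)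
  simp (disch := omega) only [List.getD_eraseIdx_of_lt, List.getD_eraseIdx_of_le,
    List.eraseIdx_eraseIdx_of_le] at hE hU
  have hratio := one_sub_mul_le_of_antitoneOn_div hf_nonneg hf_mono hf_sym hu.1
    (hq.getD_le_getD (j := m + 1) (by omega) (by omega)) hw.2
  unfold queryCost at hE hU ⊢
  simp only [hE, cost_of_length_lt (θ := t + 1 + 1) (q := q.eraseIdx 0) (by grind),
    cost_of_length_lt (θ := t + 1 + 1) (q := q.eraseIdx (m + 1)) (by grind),
    cost_of_length_lt (θ := t + 1) (q := (q.eraseIdx (m + 1)).eraseIdx 0) (by grind)] at hU ⊢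
  linarith [mul_le_mul_of_nonneg_left hU hu.1]

theorem queryCost_add_le_of_rankRule (hA1 : RankRule f (n - 1)) (hA2 : RankRule f (n - 2))
    (hq : SortedProbs q) (hlen : q.length = n) {p m t : ℕ} (hpm : p < m) (hm : m + 1 < n)
    (hpt : p + t + 3 = n) :
    queryCost f (t + 1) (q.getD (p + 1) 0) (q.eraseIdx (p + 1))
        + ((1 - q.getD (p + 1) 0) * f (q.getD (m + 1) 0)
          - (1 - q.getD (m + 1) 0) * f (q.getD (p + 1) 0)) ≤
      queryCost f (t + 1) (q.getD (m + 1) 0) (q.eraseIdx (m + 1))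
        + q.getD p 0 * dualExchangeTerm f t (q.eraseIdx p) p m
        + (1 - q.getD p 0) * dualExchangeTerm f (t + 1) (q.eraseIdx p) p m := by
  have hu := hq.getD_mem_Icc (j := p + 1) (by omega)
  have hE1 := hA1 _ (hq.eraseIdx (m + 1)) (by grind) (p + 1) t (by omega)
  have hE2 := hA1 _ (hq.eraseIdx (m + 1)) (by grind) p (t + 1) (by omega)
  have hE3 := hA2 _ ((hq.eraseIdx (m + 1)).eraseIdx (p + 1)) (by grind) p t (by omega)
  have hU1 := cost_succ_le (f := f) (t := t) (q := q.eraseIdx (p + 1)) (j := m) (by grind)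
    (by grind)
  have hU2 := cost_succ_le (f := f) (t := t + 1) (q := q.eraseIdx (p + 1)) (j := p) (by grind)
    (by grind)
  simp (disch := omega) only [dualExchangeTerm, List.getD_eraseIdx_of_lt,
    List.getD_eraseIdx_of_le, List.eraseIdx_eraseIdx_of_le] at hE1 hE2 hE3 hU1 hU2 ⊢
  unfold queryCost at hE1 hE2 hE3 hU1 hU2 ⊢
  rw [hE1, hE2]
  rw [hE3] at hU1 ⊢
  linarith [mul_le_mul_of_nonneg_left hU1 hu.1, mul_le_mul_of_nonneg_left hU2 (sub_nonneg.2 hu.2)]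

end rank

section induction

variable {f : ℝ → ℝ} (hf_nonneg : ∀ x ∈ Set.Icc (0 : ℝ) 1, 0 ≤ f x)
  (hf_sym : ∀ x ∈ Set.Icc (0 : ℝ) 1, f x = f (1 - x))
  (hf_mono : AntitoneOn (fun x => f x / x) (Set.Ioc (0 : ℝ) 1))
include hf_nonneg hf_sym hf_mono

theorem queryCost_rank_le_of_lt {n : ℕ} (hA1 : RankRule f (n - 1)) (hA2 : RankRule f (n - 2))
    (hC : ExchangeBound f (n - 1)) {q : List ℝ} (hq : SortedProbs q) (hlen : q.length = n)
    {s t j : ℕ} (hst : s + t + 1 = n) (hsj : s < j) (hj : j < n) :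
    queryCost f t (q.getD s 0) (q.eraseIdx s) ≤ queryCost f t (q.getD j 0) (q.eraseIdx j) := by
  obtain ⟨t, rfl⟩ : ∃ t', t = t' + 1 := ⟨t - 1, by omega⟩
  rcases s with _ | p
  · exact queryCost_zero_le_of_rankRule hf_nonneg hf_sym hf_mono (by convert hA1 using 2; omega)
      hq (by omega) (by omega) (by omega)
  obtain ⟨m, rfl⟩ : ∃ m, j = m + 1 := ⟨j - 1, by omega⟩
  have hr := hq.eraseIdx p
  have hrlen : (q.eraseIdx p).length = n - 1 := by grind
  have hz := hq.getD_mem_Icc (j := p) (by omega)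
  have h0 := hC.dualExchangeTerm_le hf_sym hr hrlen (i := p) (j := m) (θ := t) (by omega)
    (by omega) (by omega)
  have h1 := hC.dualExchangeTerm_le hf_sym hr hrlen (i := p) (j := m) (θ := t + 1) (by omega)
    (by omega) (by omega)
  simp (disch := omega) only [List.getD_eraseIdx_of_le] at h0 h1
  have := queryCost_add_le_of_rankRule hA1 hA2 hq hlen (p := p) (m := m) (t := t) (by omega)
    (by omega) (by omega)
  linarith [mul_le_mul_of_nonneg_left h0 hz.1, mul_le_mul_of_nonneg_left h1 (sub_nonneg.2 hz.2)]

theorem rankRule_of_exchangeBound {n : ℕ} (hA1 : RankRule f (n - 1))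
    (hA2 : RankRule f (n - 2)) (hC : ExchangeBound f (n - 1)) : RankRule f n := by
  intro q hq hlen s t hst
  refine le_antisymm (cost_succ_le (by omega) (by omega)) (le_cost_succ (by omega) fun j hj => ?_)
  rcases lt_trichotomy s j with hsj | rfl | hjs
  · exact queryCost_rank_le_of_lt hf_nonneg hf_sym hf_mono hA1 hA2 hC hq hlen hst hsj (by omega)
  · rfl
  have hdual (k : ℕ) (hk : k < q.length) := queryCost_getD_dualList hf_sym hq.mem_Icc
    (t := t) (by omega) hk (cost_dualList hf_sym (hq.eraseIdx k).mem_Icc)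
  rw [hdual s (by omega), hdual j hj]
  exact queryCost_rank_le_of_lt hf_nonneg hf_sym hf_mono hA1 hA2 hC hq.dualList
    (by simp [hlen]) (by omega) (by omega) (by omega)

theorem rankRule_and_exchangeBound (n : ℕ) : RankRule f n ∧ ExchangeBound f n := by
  induction n using Nat.strong_induction_on with
  | _ n ih =>
    rcases Nat.eq_zero_or_pos n with rfl | hn
    · exact ⟨fun _ _ _ _ _ h => by omega, fun _ _ _ _ _ _ _ h => by omega⟩
    obtain ⟨hA1, hC⟩ := ih (n - 1) (by omega)
    have hA2 := (ih (n - 2) (by omega)).1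
    exact ⟨rankRule_of_exchangeBound hf_nonneg hf_sym hf_mono hA1 hA2 hC,
      exchangeBound_of_rankRule hf_nonneg hf_mono hA1 hA2 hC⟩

end induction

/-- Part (c) of the loaded induction hypothesis in Lemma 1:
the quantity `S²_{m,k,i}` is bounded by `p_{k+1} f(p_i) - p_i f(p_{k+1})`
for `1 ≤ i ≤ k ≤ m-1` (1-based indices). -/
theorem stmt_2 (f : ℝ → ℝ)
    (hf_nonneg : ∀ x ∈ Set.Icc (0:ℝ) 1, 0 ≤ f x)
    (hf_sym : ∀ x ∈ Set.Icc (0:ℝ) 1, f x = f (1 - x))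
    (hf_mono : AntitoneOn (fun x => f x / x) (Set.Ioc (0:ℝ) 1))
    (m : ℕ) (p : Fin m → ℝ)
    (hp0 : ∀ i, 0 ≤ p i) (hp1 : ∀ i, p i ≤ 1) (hsorted : Monotone p)
    (k i : ℕ) (hi1 : 1 ≤ i) (hik : i ≤ k) (hkm : k + 1 ≤ m) :
    (p ⟨i - 1, by omega⟩ - p ⟨k, by omega⟩) *
        cost f (m - k - 1) (((List.ofFn p).eraseIdx k).eraseIdx (i - 1))
      + p ⟨k, by omega⟩ * cost f (m - k - 1) ((List.ofFn p).eraseIdx k)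
      - p ⟨i - 1, by omega⟩ * cost f (m - k - 1) ((List.ofFn p).eraseIdx (i - 1))
    ≤ p ⟨k, by omega⟩ * f (p ⟨i - 1, by omega⟩)
      - p ⟨i - 1, by omega⟩ * f (p ⟨k, by omega⟩) := by
  have hp : SortedProbs (List.ofFn p) :=
    ⟨List.sortedLE_iff_pairwise.mp (List.sortedLE_ofFn_iff.mpr hsorted), by
      simpa [List.mem_ofFn] using fun j => And.intro (hp0 j) (hp1 j)⟩
  have hbound := (rankRule_and_exchangeBound hf_nonneg hf_sym hf_mono m).2 _ hp
    List.length_ofFn (i - 1) k (m - k - 1) (by omega) (by omega) (by omega)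
  simp only [exchangeTerm, List.getD_eq_getElem _ _ (by simp; omega : i - 1 < (List.ofFn p).length),
    List.getD_eq_getElem _ _ (by simp; omega : k < (List.ofFn p).length), List.getElem_ofFn] at hbound
  linarith
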